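/- Let ℓ ≥ 1 and d ≤ m be positive integers and L > 0 a constant with d ≥ 4(Lℓ + 1). Let F be an m-vertex graph with minimum degree at least d-1 such that c_i(u,v;F) ≤ L for every edge uv of F and every 3 ≤ i ≤ 2ℓ. Then the maximum degree of F satisfies Δ(F) ≤ (m / d^{ℓ-1}) · g_ℓ(L), where g_ℓ(L) = ∏_{j=1}^{ℓ-1} 2(Lj+1). -/
import Mathlib


/-- `c_k(u,v;G)`: the number of cycles of length `k` in `G` containing the edge `uv`.
Each such cycle corresponds to a unique path from `u` to `v` of length `k-1`
avoiding the edge `uv`. -/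
noncomputable def cyclesThroughEdge {V : Type} (G : SimpleGraph V) (k : ℕ) (u v : V) : ℕ :=
  Nat.card {p : G.Walk u v // p.IsPath ∧ p.length = k - 1 ∧ s(u, v) ∉ p.edges}

/-- The constant `g_k(L) = ∏_{j=1}^{k-1} 2(Lj + 1)`, so that `g_1(L) = 1`. -/
noncomputable def gconst (L : ℝ) (k : ℕ) : ℝ :=
  ∏ j ∈ Finset.Icc 1 (k - 1), 2 * (L * j + 1)

/-- The number of neighbors of a vertex (its degree). -/
noncomputable def ndeg {V : Type} (G : SimpleGraph V) (v : V) : ℕ :=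
  Nat.card ↥(G.neighborSet v)

open SimpleGraph Finset Function
set_option linter.unusedSectionVars false
set_option linter.unreachableTactic false
set_option linter.unusedTactic false
set_option maxHeartbeats 1000000

namespace Stmt13

/-- generic counting: card bounded by sum of fiber bounds -/
lemma card_le_sum_fibers {α : Type*} [Finite α] {ι : Type*} [DecidableEq ι]
    (f : α → ι) (s : Finset ι)
    (hf : ∀ a, f a ∈ s) (g : ι → ℕ) (h : ∀ i ∈ s, Nat.card {a // f a = i} ≤ g i) :
    Nat.card α ≤ ∑ i ∈ s, g i := by
  classical
  letI := Fintype.ofFinite α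
  rw [Nat.card_eq_fintype_card, ← Finset.card_univ]
  rw [Finset.card_eq_sum_card_fiberwise (fun a _ => hf a)]
  refine Finset.sum_le_sum fun i hi => ?_
  have : Nat.card {a // f a = i} = (Finset.univ.filter fun a => f a = i).card := by
    rw [Nat.card_eq_fintype_card, Fintype.card_subtype]
  rw [← this]
  exact h i hi

lemma nat_card_sigma {ι : Type*} [Fintype ι] (f : ι → Type*) [∀ i, Finite (f i)] :
    Nat.card (Σ i, f i) = ∑ i : ι, Nat.card (f i) := by
  classical
  letI : ∀ i, Fintype (f i) := fun i => Fintype.ofFinite _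
  rw [Nat.card_eq_fintype_card, Fintype.card_sigma]
  exact Finset.sum_congr rfl fun i _ => (Nat.card_eq_fintype_card).symm

variable {V : Type} [Fintype V] [DecidableEq V] {G : SimpleGraph V} [DecidableRel G.Adj]

lemma finite_walk_subtype {u v : V} (P : G.Walk u v → Prop) (n : ℕ)
    (h : ∀ p, P p → p.length = n) : Finite {p : G.Walk u v // P p} :=
  Finite.of_injective
    (fun x => (⟨x.1, h _ x.2⟩ : {p : G.Walk u v // p.length = n}))
    (fun a b hab => Subtype.ext (by simpa [Subtype.ext_iff] using hab))

lemma eq_of_length_zero {u v : V} (p : G.Walk u v) (h : p.length = 0) : u = v := by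
  cases p with
  | nil => rfl
  | cons _ _ => simp at h

lemma walk_length_one {u v : V} (p : G.Walk u v) (h : p.length = 1) :
    ∃ (a : G.Adj u v), p = SimpleGraph.Walk.cons a SimpleGraph.Walk.nil := by
  cases p with
  | nil => simp at h
  | cons a q =>
    have hq : q.length = 0 := by simpa using h
    have := eq_of_length_zero q hq
    subst this
    cases q with
    | nil => exact ⟨a, rfl⟩
    | cons _ _ => simp at hq

lemma first_edge_mem {u v : V} (p : G.Walk u v) (h : 1 ≤ p.length) :
    s(u, p.getVert 1) ∈ p.edges := by
  cases p with
  | nil => simp at h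
  | cons a q =>
    have : (SimpleGraph.Walk.cons a q).getVert 1 = q.getVert 0 :=
      SimpleGraph.Walk.getVert_cons_succ q a
    rw [this, SimpleGraph.Walk.getVert_zero]
    simp

lemma adj_getVert_one {u v : V} (p : G.Walk u v) (h : 1 ≤ p.length) :
    G.Adj u (p.getVert 1) := by
  cases p with
  | nil => simp at h
  | cons a q =>
    have : (SimpleGraph.Walk.cons a q).getVert 1 = q.getVert 0 :=
      SimpleGraph.Walk.getVert_cons_succ q a
    rw [this, SimpleGraph.Walk.getVert_zero]
    exact a

lemma mem_support_of_mem_edge {u v x : V} (p : G.Walk u v) {e : Sym2 V}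
    (he : e ∈ p.edges) (hx : x ∈ e) : x ∈ p.support := by
  induction e with
  | _ a b =>
    rcases Sym2.mem_iff.mp hx with rfl | rfl
    · exact p.fst_mem_support_of_mem_edges he
    · exact p.snd_mem_support_of_mem_edges he

lemma getVert_one_append {u v z : V} (p : G.Walk u v) (q : G.Walk v z) (h : 1 ≤ p.length) :
    (p.append q).getVert 1 = p.getVert 1 := by
  rw [SimpleGraph.Walk.getVert_append]
  by_cases h1 : 1 < p.length
  · rw [if_pos h1]
  · have hl : p.length = 1 := by omega
    rw [if_neg h1, hl]
    simpa using (hl ▸ p.getVert_length).symm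

lemma support_exists_edge {u v x : V} (p : G.Walk u v) (h : 1 ≤ p.length)
    (hx : x ∈ p.support) : ∃ e ∈ p.edges, x ∈ e := by
  induction p with
  | nil => simp at h
  | @cons a b c adj q ih =>
    rw [SimpleGraph.Walk.support_cons] at hx
    rcases List.mem_cons.mp hx with rfl | hx'
    · exact ⟨s(x, b), by simp, by simp⟩
    · rcases Nat.eq_zero_or_pos q.length with hq | hq
      · have : b = c := eq_of_length_zero q hq
        subst this
        have : x = b := by
          cases q with
          | nil => simpa using hx'
          | cons _ _ => simp at hq
        subst this
        exact ⟨s(a, x), by simp, by simp⟩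
      · obtain ⟨e, he, hxe⟩ := ih hq hx'
        exact ⟨e, by simp [he], hxe⟩


/-! ### distance helpers -/

lemma dist_le_dist_add_one {a b w : V} (h : G.Adj a b) : G.dist a w ≤ G.dist b w + 1 := by
  by_cases hr : G.Reachable b w
  · obtain ⟨p, hp⟩ := hr.exists_walk_length_eq_dist
    have := SimpleGraph.dist_le (SimpleGraph.Walk.cons h p)
    simpa [hp] using this
  · have h2 : ¬ G.Reachable a w := fun hr2 => hr ((h.symm.reachable).trans hr2)
    simp [SimpleGraph.dist_eq_zero_of_not_reachable h2]

lemma dropUntil_length_of_shortest {u w z : V} (p : G.Walk u w) (hp : p.length = G.dist u w)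
    (hz : z ∈ p.support) :
    (p.dropUntil z hz).length = G.dist z w ∧
    (p.takeUntil z hz).length + G.dist z w = p.length := by
  have hsum : (p.takeUntil z hz).length + (p.dropUntil z hz).length = p.length := by
    conv_rhs => rw [← p.take_spec hz]
    rw [SimpleGraph.Walk.length_append]
  have h1 : G.dist z w ≤ (p.dropUntil z hz).length := SimpleGraph.dist_le _
  have h2 : G.dist u w ≤ (p.takeUntil z hz).length + G.dist z w := by
    obtain ⟨q, hq⟩ := (SimpleGraph.Walk.reachable (p.dropUntil z hz)).exists_walk_length_eq_dist
    have := SimpleGraph.dist_le ((p.takeUntil z hz).append q)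
    rwa [SimpleGraph.Walk.length_append, hq] at this
  omega

lemma support_dist_le {u w x : V} (p : G.Walk u w) (hx : x ∈ p.support) :
    G.dist x w ≤ p.length := by
  have hsum : (p.takeUntil x hx).length + (p.dropUntil x hx).length = p.length := by
    conv_rhs => rw [← p.take_spec hx]
    rw [SimpleGraph.Walk.length_append]
  have h1 : G.dist x w ≤ (p.dropUntil x hx).length := SimpleGraph.dist_le _
  omega

/-- vertex on a shortest path to `w`, of larger distance than `v`, cannot be `v`'s position:
`v` is not on a shortest path `q_y` from `y` to `w` whenever `dist y w ≤ dist v w` and `v ≠ y`. -/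
lemma not_mem_shortest {y w v : V} (q : G.Walk y w) (hq : q.length = G.dist y w)
    (hle : G.dist y w ≤ G.dist v w) (hne : v ≠ y) : v ∉ q.support := by
  intro hv
  obtain ⟨h1, h2⟩ := dropUntil_length_of_shortest q hq hv
  have h3 : (q.takeUntil v hv).length = 0 := by omega
  exact hne (eq_of_length_zero _ h3).symm

/-! ### the meet lemma -/

lemma meet_base {v w a : V} (p' : G.Walk v w) (hp' : p'.IsPath) (hp'd : p'.length = G.dist v w)
    (ha : a ∈ p'.support) (hav : a ≠ v) :
    ∃ (c : ℕ) (P : G.Walk a v), P.IsPath ∧ P.length + 2 * c = G.dist a w + p'.length ∧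
      (∀ e ∈ P.edges, e ∈ p'.edges) ∧ 1 ≤ P.length ∧
      P.reverse.getVert 1 = p'.getVert 1 := by
  obtain ⟨h1, h2⟩ := dropUntil_length_of_shortest p' hp'd ha
  set tk := p'.takeUntil a ha with htk
  have htklen : 1 ≤ tk.length := by
    rcases Nat.eq_zero_or_pos tk.length with h0 | h0
    · exact absurd (eq_of_length_zero tk h0).symm hav
    · exact h0
  refine ⟨G.dist a w, tk.reverse, hp'.takeUntil ha |>.reverse, ?_, ?_, ?_, ?_⟩
  · rw [SimpleGraph.Walk.length_reverse]; omega
  · intro e he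
    rw [SimpleGraph.Walk.edges_reverse, List.mem_reverse] at he
    exact p'.edges_takeUntil_subset ha he
  · rwa [SimpleGraph.Walk.length_reverse]
  · rw [SimpleGraph.Walk.reverse_reverse]
    have := getVert_one_append tk (p'.dropUntil a ha) htklen
    rw [p'.take_spec ha] at this
    exact this.symm

lemma meet {a w : V} (t : G.Walk a w) :
    t.IsPath → t.length = G.dist a w →
    ∀ (v : V) (p' : G.Walk v w), p'.IsPath → p'.length = G.dist v w → v ∉ t.support →
    ∃ (c : ℕ) (P : G.Walk a v), P.IsPath ∧ P.length + 2 * c = t.length + p'.length ∧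
      (∀ e ∈ P.edges, e ∈ t.edges ∨ e ∈ p'.edges) ∧ 1 ≤ P.length ∧
      P.reverse.getVert 1 = p'.getVert 1 := by
  induction t with
  | @nil ww =>
    intro ht htd v p' hp' hp'd hv
    have ha : ww ∈ p'.support := p'.end_mem_support
    have hav : ww ≠ v := by
      intro hwv; apply hv; simp [hwv.symm]
    obtain ⟨c, P, h1, h2, h3, h4, h5⟩ := meet_base p' hp' hp'd ha hav
    refine ⟨c, P, h1, ?_, fun e he => Or.inr (h3 e he), h4, h5⟩
    have : G.dist ww ww = 0 := SimpleGraph.dist_self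
    simp only [SimpleGraph.Walk.length_nil]
    omega
  | @cons a b ww h t ih =>
    intro ht htd v p' hp' hp'd hv
    by_cases hmem : a ∈ p'.support
    · have hav : a ≠ v := by
        intro hval; apply hv; rw [hval.symm]; simp
      obtain ⟨c, P, h1, h2, h3, h4, h5⟩ := meet_base p' hp' hp'd hmem hav
      refine ⟨c, P, h1, ?_, fun e he => Or.inr (h3 e he), h4, h5⟩
      rw [← htd] at h2; omega
    · -- step case
      have htp : t.IsPath := ht.of_cons
      have hanot : a ∉ t.support := ((SimpleGraph.Walk.cons_isPath_iff h t).mp ht).2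
      have hvt : v ∉ t.support := fun hx => hv (by simp [hx])
      have htd' : t.length = G.dist b ww := by
        have e1 : t.length + 1 = G.dist a ww := by simpa using htd
        have e2 : G.dist b ww ≤ t.length := SimpleGraph.dist_le t
        have e3 : G.dist a ww ≤ G.dist b ww + 1 := dist_le_dist_add_one h
        omega
      obtain ⟨c, P', h1, h2, h3, h4, h5⟩ := ih htp htd' v p' hp' hp'd hvt
      have haP : a ∉ P'.support := by
        intro haP
        obtain ⟨e, he, hae⟩ := support_exists_edge P' h4 haP
        rcases h3 e he with h' | h'
        · exact hanot (mem_support_of_mem_edge t h' hae)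
        · exact hmem (mem_support_of_mem_edge p' h' hae)
      refine ⟨c, SimpleGraph.Walk.cons h P', h1.cons haP, ?_, ?_, ?_, ?_⟩
      · simp only [SimpleGraph.Walk.length_cons]; omega
      · intro e he
        rw [SimpleGraph.Walk.edges_cons, List.mem_cons] at he
        rcases he with rfl | he
        · exact Or.inl (by simp)
        · rcases h3 e he with h' | h'
          · exact Or.inl (by simp [h'])
          · exact Or.inr h'
      · simp
      · rw [SimpleGraph.Walk.reverse_cons]
        rw [getVert_one_append _ _ (by rwa [SimpleGraph.Walk.length_reverse])]
        exact h5


lemma back_card {w v : V} {j K : ℕ} (hj : 1 ≤ j)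
    (hK : ∀ u y, G.Adj u y → ∀ i, 3 ≤ i → i ≤ 2*j+1 → cyclesThroughEdge G i u y ≤ K)
    (hd : G.dist v w = j) :
    Nat.card {y : V // G.Adj v y ∧ G.dist y w ≤ j} ≤ 1 + K * (2*j - 1) := by
  classical
  have hvw : v ≠ w := by
    intro h; rw [h, SimpleGraph.dist_self] at hd; omega
  have hrvw : G.Reachable v w := by
    apply SimpleGraph.Reachable.of_dist_ne_zero; omega
  obtain ⟨q, hqp, hql⟩ := hrvw.exists_path_of_dist
  rw [hd] at hql
  obtain ⟨u, h, t, rfl⟩ := SimpleGraph.Walk.exists_eq_cons_of_ne hvw q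
  have htl : t.length = j - 1 := by simp at hql; omega
  have htp : t.IsPath := hqp.of_cons
  have hvt : v ∉ t.support := ((SimpleGraph.Walk.cons_isPath_iff h t).mp hqp).2
  have huv : G.Adj u v := h.symm
  set α := {y : V // (G.Adj v y ∧ G.dist y w ≤ j) ∧ y ≠ u} with hα
  have key : ∀ y : α, ∃ P : G.Walk u v, P.IsPath ∧ s(u,v) ∉ P.edges ∧
      P.reverse.getVert 1 = y.1 ∧ 2 ≤ P.length ∧ P.length ≤ 2*j := by
    rintro ⟨y, ⟨hyadj, hydist⟩, hyu⟩
    have hyv : y ≠ v := hyadj.ne'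
    have hry : G.Reachable y w := (hyadj.symm.reachable).trans hrvw
    obtain ⟨qy, hqyp, hqyl⟩ := hry.exists_path_of_dist
    have hvqy : v ∉ qy.support := not_mem_shortest qy hqyl (by rw [hd]; exact hydist) hyv.symm
    set W : G.Walk u v := (t.append qy.reverse).concat hyadj.symm with hW
    have hedge : ∀ e ∈ W.edges, v ∈ e → e = s(y, v) := by
      intro e he hve
      rw [hW, SimpleGraph.Walk.edges_concat, List.concat_eq_append, List.mem_append] at he
      rcases he with he | he
      · rw [SimpleGraph.Walk.edges_append, List.mem_append] at he
        rcases he with he | he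
        · exact absurd (mem_support_of_mem_edge t he hve) hvt
        · rw [SimpleGraph.Walk.edges_reverse, List.mem_reverse] at he
          exact absurd (mem_support_of_mem_edge qy he hve) hvqy
      · simpa using he
    set P := W.bypass with hP
    have hPp : P.IsPath := W.bypass_isPath
    have hPe : P.edges ⊆ W.edges := W.edges_bypass_subset
    have havoid : s(u,v) ∉ P.edges := by
      intro hin
      have := hedge _ (hPe hin) (Sym2.mem_mk_right u v)
      rw [Sym2.eq_iff] at this
      rcases this with ⟨h1, _⟩ | ⟨h1, h2⟩
      · exact hyu h1.symm
      · exact huv.ne h1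
    have hlen2 : P.length ≤ 2*j := by
      have h1 : P.length ≤ W.length := W.length_bypass_le
      have h2 : W.length = t.length + qy.length + 1 := by
        rw [hW, SimpleGraph.Walk.length_concat, SimpleGraph.Walk.length_append,
          SimpleGraph.Walk.length_reverse]
      have h3 : qy.length ≤ j := by rw [hqyl]; exact hydist
      omega
    have hlen0 : P.length ≠ 0 := fun h0 => huv.ne (eq_of_length_zero P h0)
    have hlen1 : P.length ≠ 1 := by
      intro h1
      obtain ⟨a, ha⟩ := walk_length_one P h1
      apply havoid
      rw [ha]
      simp
    have hrec : P.reverse.getVert 1 = y := by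
      have h1le : 1 ≤ P.reverse.length := by
        rw [SimpleGraph.Walk.length_reverse]; omega
      have hfe := first_edge_mem P.reverse h1le
      rw [SimpleGraph.Walk.edges_reverse, List.mem_reverse] at hfe
      have := hedge _ (hPe hfe) (Sym2.mem_mk_left v _)
      rw [Sym2.eq_iff] at this
      rcases this with ⟨h1, h2⟩ | ⟨h1, h2⟩
      · exact absurd h1 hyadj.ne
      · exact h2
    exact ⟨P, hPp, havoid, hrec, by omega, hlen2⟩
  -- choose the paths
  set Pf : α → G.Walk u v := fun y => Classical.choose (key y) with hPf
  have hPfs : ∀ y : α, (Pf y).IsPath ∧ s(u,v) ∉ (Pf y).edges ∧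
      (Pf y).reverse.getVert 1 = y.1 ∧ 2 ≤ (Pf y).length ∧ (Pf y).length ≤ 2*j :=
    fun y => Classical.choose_spec (key y)
  have hcardα : Nat.card α ≤ K * (2*j - 1) := by
    have := card_le_sum_fibers (fun y : α => (Pf y).length + 1) (Finset.Icc 3 (2*j+1))
      (fun y => by
        have := hPfs y
        show (Pf y).length + 1 ∈ _
        rw [Finset.mem_Icc]
        omega)
      (fun _ => K)
      (fun i hi => by
        rw [Finset.mem_Icc] at hi
        refine le_trans ?_ (hK u v huv i hi.1 hi.2)
        unfold cyclesThroughEdge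
        haveI : Finite {p : G.Walk u v // p.IsPath ∧ p.length = i - 1 ∧ s(u, v) ∉ p.edges} :=
          finite_walk_subtype _ (i-1) (fun p hp => hp.2.1)
        refine Nat.card_le_card_of_injective
          (fun x => (⟨Pf x.1, (hPfs x.1).1, by
            have hx2 : (Pf x.1).length + 1 = i := x.2
            omega, (hPfs x.1).2.1⟩ :
            {p : G.Walk u v // p.IsPath ∧ p.length = i - 1 ∧ s(u, v) ∉ p.edges})) ?_
        intro a b hab
        have h1 : Pf a.1 = Pf b.1 := by simpa [Subtype.ext_iff] using hab
        have h2 : a.1.1 = b.1.1 := by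
          rw [← (hPfs a.1).2.2.1, ← (hPfs b.1).2.2.1, h1]
        exact Subtype.ext (Subtype.ext h2))
    refine le_trans this ?_
    rw [Finset.sum_const, Nat.card_Icc, smul_eq_mul]
    have he : 2 * j + 1 + 1 - 3 = 2 * j - 1 := by omega
    rw [he, mul_comm]
  -- add back u
  have hsplit : Nat.card {y : V // G.Adj v y ∧ G.dist y w ≤ j} ≤ 1 + Nat.card α := by
    haveI : Finite α := Subtype.finite
    have hinj : Function.Injective (fun (y : {y : V // G.Adj v y ∧ G.dist y w ≤ j}) =>
        if hy : y.1 = u then (none : Option α) else some ⟨y.1, y.2, hy⟩) := by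
      intro a b hab
      by_cases ha : a.1 = u <;> by_cases hb : b.1 = u <;>
        simp [ha, hb, Subtype.ext_iff] at hab
      · exact Subtype.ext (ha.trans hb.symm)
      · exact Subtype.ext (by injection hab)
    have := Nat.card_le_card_of_injective _ hinj
    refine le_trans this ?_
    haveI := Fintype.ofFinite α
    rw [Nat.card_eq_fintype_card, Nat.card_eq_fintype_card, Fintype.card_option]
    omega
  omega


lemma cons_proof_irrel {u v w : V} (h h' : G.Adj u v) (t : G.Walk v w) :
    SimpleGraph.Walk.cons h t = SimpleGraph.Walk.cons h' t := rfl

lemma mult_lemma {w : V} {K ℓ : ℕ}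
    (hK : ∀ u y, G.Adj u y → ∀ i, 3 ≤ i → i ≤ 2*ℓ → cyclesThroughEdge G i u y ≤ K) :
    ∀ j, 1 ≤ j → j ≤ ℓ → ∀ v : V, G.dist v w = j →
      Nat.card {p : G.Walk v w // p.IsPath ∧ p.length = j} ≤
        ∏ i ∈ Finset.Icc 1 (j-1), (K * i + 1) := by
  intro j hj
  induction j, hj using Nat.le_induction with
  | base =>
    intro _ v _
    haveI : Finite {p : G.Walk v w // p.IsPath ∧ p.length = 1} :=
      finite_walk_subtype _ 1 (fun p hp => hp.2)
    have hsub : ∀ a b : {p : G.Walk v w // p.IsPath ∧ p.length = 1}, a = b := by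
      rintro ⟨p, _, hp⟩ ⟨q, _, hq⟩
      obtain ⟨a, rfl⟩ := walk_length_one p hp
      obtain ⟨b, rfl⟩ := walk_length_one q hq
      rfl
    have : Nat.card {p : G.Walk v w // p.IsPath ∧ p.length = 1} ≤ 1 := by
      refine le_trans (Nat.card_le_card_of_injective (fun _ => (() : Unit))
        (fun a b _ => hsub a b)) ?_
      simp
    simpa using this
  | succ j hj1 ih =>
    intro hjl v hv
    obtain ⟨j', rfl⟩ : ∃ j', j = j' + 1 := ⟨j - 1, by omega⟩
    classical
    set j := j' + 1 with hjdef
    have hjl' : j ≤ ℓ := by omega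
    set C := {p : G.Walk v w // p.IsPath ∧ p.length = j + 1} with hC
    haveI : Finite C := finite_walk_subtype _ (j+1) (fun p hp => hp.2)
    haveI : Fintype C := Fintype.ofFinite C
    have hvw : v ≠ w := by
      intro h; rw [h, SimpleGraph.dist_self] at hv; omega
    -- tail decomposition
    have htail2 : ∀ (p : C) (u : V), p.1.getVert 1 = u →
        ∃ (t : G.Walk u w) (h : G.Adj v u), p.1 = SimpleGraph.Walk.cons h t := by
      rintro p u hu
      obtain ⟨x, h, t, he⟩ := SimpleGraph.Walk.exists_eq_cons_of_ne hvw p.1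
      have hx : p.1.getVert 1 = x := by
        rw [he, SimpleGraph.Walk.getVert_cons_succ, SimpleGraph.Walk.getVert_zero]
      rw [hx] at hu
      subst hu
      exact ⟨t, h, he⟩
    have hadj : ∀ p : C, G.Adj v (p.1.getVert 1) := by
      intro p
      exact adj_getVert_one p.1 (by rw [p.2.2]; omega)
    have hdist : ∀ p : C, G.dist (p.1.getVert 1) w = j := by
      intro p
      obtain ⟨t, h, he⟩ := htail2 p _ rfl
      have htlen : t.length = j := by
        have := p.2.2
        rw [he] at this
        simpa using this
      have h1 : G.dist (p.1.getVert 1) w ≤ j := le_trans (SimpleGraph.dist_le t) (le_of_eq htlen)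
      have h2 : G.dist v w ≤ G.dist (p.1.getVert 1) w + 1 := dist_le_dist_add_one (hadj p)
      omega
    -- second vertex map
    set sv : C → V := fun p => p.1.getVert 1 with hsv
    set occ : Finset V := Finset.univ.image sv with hocc
    set B' : ℕ := ∏ i ∈ Finset.Icc 1 j', (K * i + 1) with hB'
    -- fiber bound
    have hfiber : ∀ u ∈ occ, Nat.card {p : C // sv p = u} ≤ B' := by
      intro u hu
      obtain ⟨p₀, _, hp₀⟩ := Finset.mem_image.mp hu
      have hud : G.dist u w = j := by rw [← hp₀]; exact hdist p₀
      haveI : Finite {q : G.Walk u w // q.IsPath ∧ q.length = j} :=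
        finite_walk_subtype _ j (fun q hq => hq.2)
      have step : Nat.card {p : C // sv p = u} ≤
          Nat.card {q : G.Walk u w // q.IsPath ∧ q.length = j} := by
        have keymap : ∀ x : {p : C // sv p = u},
            ∃ (t : G.Walk u w) (h : G.Adj v u),
              x.1.1 = SimpleGraph.Walk.cons h t ∧ t.IsPath ∧ t.length = j := by
          intro x
          obtain ⟨t, h, he⟩ := htail2 x.1 u x.2
          refine ⟨t, h, he, ?_, ?_⟩
          · have := x.1.2.1; rw [he] at this; exact this.of_cons
          · have := x.1.2.2; rw [he] at this; simpa using this
        refine Nat.card_le_card_of_injective (fun x =>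
          ⟨Classical.choose (keymap x),
            (Classical.choose_spec (keymap x)).choose_spec.2.1,
            (Classical.choose_spec (keymap x)).choose_spec.2.2⟩) ?_
        intro a b hab
        have hta : a.1.1 = SimpleGraph.Walk.cons (Classical.choose_spec (keymap a)).choose
            (Classical.choose (keymap a)) := (Classical.choose_spec (keymap a)).choose_spec.1
        have htb : b.1.1 = SimpleGraph.Walk.cons (Classical.choose_spec (keymap b)).choose
            (Classical.choose (keymap b)) := (Classical.choose_spec (keymap b)).choose_spec.1
        have heq : Classical.choose (keymap a) = Classical.choose (keymap b) := by
          simpa [Subtype.ext_iff] using hab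
        refine Subtype.ext (Subtype.ext ?_)
        rw [hta, htb]
        exact (congrArg _ heq).trans (cons_proof_irrel _ _ _)
      exact le_trans step (ih hjl' u hud)
    -- combine via fibers
    have hmain : Nat.card C ≤ occ.card * B' := by
      have := card_le_sum_fibers sv occ
        (fun p => Finset.mem_image.mpr ⟨p, Finset.mem_univ p, rfl⟩)
        (fun _ => B') hfiber
      simpa [Finset.sum_const, smul_eq_mul] using this
    -- bound occ.card
    have hocccard : occ.card ≤ K * j + 1 := by
      by_cases hne : Nonempty C
      · obtain ⟨x₁⟩ := hne
        set u₁ : V := sv x₁ with hu₁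
        obtain ⟨t₁, h₁, he₁⟩ := htail2 x₁ u₁ rfl
        have ht₁p : t₁.IsPath := by
          have := x₁.2.1; rw [he₁] at this; exact this.of_cons
        have ht₁l : t₁.length = j := by
          have := x₁.2.2; rw [he₁] at this; simpa using this
        have hvt₁ : v ∉ t₁.support := by
          have := x₁.2.1; rw [he₁] at this
          exact ((SimpleGraph.Walk.cons_isPath_iff h₁ t₁).mp this).2
        have hu₁d : G.dist u₁ w = j := hdist x₁
        have hu₁occ : u₁ ∈ occ := Finset.mem_image.mpr ⟨x₁, Finset.mem_univ x₁, rfl⟩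
        -- first-edge uniqueness for members of C
        have hfirstedge : ∀ (p : C) (e : Sym2 V), e ∈ p.1.edges → v ∈ e →
            e = s(v, p.1.getVert 1) := by
          intro p e he hve
          obtain ⟨t, h, hpe⟩ := htail2 p _ rfl
          have hvt : v ∉ t.support := by
            have := p.2.1; rw [hpe] at this
            exact ((SimpleGraph.Walk.cons_isPath_iff h t).mp this).2
          rw [hpe, SimpleGraph.Walk.edges_cons, List.mem_cons] at he
          rcases he with rfl | he
          · rfl
          · exact absurd (mem_support_of_mem_edge t he hve) hvt
        -- the key construction for other second vertices
        have key2 : ∀ u : V, u ∈ occ.erase u₁ →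
            ∃ P : G.Walk u₁ v, P.IsPath ∧ s(u₁, v) ∉ P.edges ∧
              P.reverse.getVert 1 = u ∧ 3 ≤ P.length ∧ ∃ c, P.length + 2*c = 2*j + 1 := by
          intro u hu
          have hne' : u ≠ u₁ := Finset.ne_of_mem_erase hu
          obtain ⟨p', _, hp'⟩ := Finset.mem_image.mp (Finset.mem_of_mem_erase hu)
          obtain ⟨c, P, hPp, hPl, hPe, hP1, hPr⟩ := meet t₁ ht₁p (by rw [ht₁l, hu₁d]) v p'.1
            p'.2.1 (by rw [p'.2.2, hv]) hvt₁
          have hgv : (p'.1).getVert 1 = u := hp'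
          have hrec : P.reverse.getVert 1 = u := by rw [hPr, hgv]
          have hlen : P.length + 2*c = 2*j + 1 := by
            rw [ht₁l, p'.2.2] at hPl; omega
          have havoid : s(u₁, v) ∉ P.edges := by
            intro hin
            rcases hPe _ hin with h' | h'
            · exact hvt₁ (mem_support_of_mem_edge t₁ h' (Sym2.mem_mk_right u₁ v))
            · have := hfirstedge p' _ h' (Sym2.mem_mk_right u₁ v)
              rw [hgv, Sym2.eq_iff] at this
              rcases this with ⟨ha, hb⟩ | ⟨ha, hb⟩
              · exact h₁.ne' ha
              · exact hne' ha.symm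
          have hlen3 : 3 ≤ P.length := by
            have hne1 : P.length ≠ 1 := by
              intro hl1
              obtain ⟨a, hP1⟩ := walk_length_one P hl1
              have : P.reverse.getVert 1 = u₁ := by
                rw [hP1, SimpleGraph.Walk.reverse_cons]
                simp
              exact hne' (hrec.symm.trans this)
            omega
          exact ⟨P, hPp, havoid, hrec, hlen3, c, hlen⟩
        -- count the erase set
        set β := {u : V // u ∈ occ.erase u₁} with hβ
        set Pf : β → G.Walk u₁ v := fun ub => Classical.choose (key2 ub.1 ub.2) with hPfd
        have hPfs : ∀ ub : β, (Pf ub).IsPath ∧ s(u₁, v) ∉ (Pf ub).edges ∧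
            (Pf ub).reverse.getVert 1 = ub.1 ∧ 3 ≤ (Pf ub).length ∧
            ∃ c, (Pf ub).length + 2*c = 2*j + 1 :=
          fun ub => Classical.choose_spec (key2 ub.1 ub.2)
        have hβcard : Nat.card β ≤ K * j := by
          have hsf := card_le_sum_fibers (fun ub : β => ((Pf ub).length + 1)/2)
            (Finset.Icc 2 (j+1))
            (fun ub => by
              obtain ⟨_, _, _, h3, c, hc⟩ := hPfs ub
              show ((Pf ub).length + 1)/2 ∈ _
              rw [Finset.mem_Icc]
              omega)
            (fun _ => K)
            (fun i hi => by
              rw [Finset.mem_Icc] at hi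
              refine le_trans ?_ (hK u₁ v h₁.symm (2*i) (by omega) (by omega))
              unfold cyclesThroughEdge
              haveI : Finite {p : G.Walk u₁ v // p.IsPath ∧ p.length = 2*i - 1 ∧
                  s(u₁, v) ∉ p.edges} :=
                finite_walk_subtype _ (2*i-1) (fun p hp => hp.2.1)
              refine Nat.card_le_card_of_injective (fun x => ⟨Pf x.1, (hPfs x.1).1, by
                obtain ⟨_, _, _, h3, c, hc⟩ := hPfs x.1
                have hx2 : ((Pf x.1).length + 1)/2 = i := x.2
                omega, (hPfs x.1).2.1⟩) ?_
              intro a b hab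
              have h1 : Pf a.1 = Pf b.1 := by simpa [Subtype.ext_iff] using hab
              have h2 : a.1.1 = b.1.1 := by
                rw [← (hPfs a.1).2.2.1, ← (hPfs b.1).2.2.1, h1]
              exact Subtype.ext (Subtype.ext h2))
          refine le_trans hsf ?_
          rw [Finset.sum_const, Nat.card_Icc, smul_eq_mul]
          have he2 : j + 1 + 1 - 2 = j := by omega
          rw [he2, mul_comm]
        have : (occ.erase u₁).card ≤ K * j := by
          have := Nat.card_eq_finsetCard (occ.erase u₁)
          rw [← this]
          exact hβcard
        have := Finset.card_erase_add_one hu₁occ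
        omega
      · have : occ = ∅ := by
          rw [hocc, Finset.image_eq_empty, Finset.univ_eq_empty_iff]
          exact not_nonempty_iff.mp hne
        rw [this, Finset.card_empty]
        omega
    -- final assembly
    refine le_trans hmain ?_
    have hstep : ∏ i ∈ Finset.Icc 1 (j + 1 - 1), (K * i + 1) = B' * (K * j + 1) := by
      have : j + 1 - 1 = j' + 1 := by omega
      rw [this, Finset.prod_Icc_succ_top (by omega)]
    rw [hstep, mul_comm]
    exact Nat.mul_le_mul_left _ hocccard


/-! ### the tree of shortest paths -/

/-- shortest paths of length `j` ending at `w`, together with their starting vertex. -/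
def SPT (G : SimpleGraph V) (w : V) (j : ℕ) : Type :=
  Σ v : V, {p : G.Walk v w // p.IsPath ∧ p.length = j ∧ G.dist v w = j}

lemma spt_finite (w : V) (j : ℕ) : Finite (SPT G w j) := by
  haveI : ∀ v : V, Finite {p : G.Walk v w // p.IsPath ∧ p.length = j ∧ G.dist v w = j} :=
    fun v => finite_walk_subtype _ j (fun p hp => hp.2.1)
  unfold SPT
  infer_instance

lemma card_subtype_split (p q : V → Prop) :
    Nat.card {y : V // p y} = Nat.card {y // p y ∧ q y} + Nat.card {y // p y ∧ ¬ q y} := by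
  classical
  rw [Nat.card_eq_fintype_card, Nat.card_eq_fintype_card, Nat.card_eq_fintype_card,
    Fintype.card_subtype, Fintype.card_subtype, Fintype.card_subtype,
    ← Finset.filter_filter, ← Finset.filter_filter]
  exact (Finset.card_filter_add_card_filter_not (p := q)).symm

lemma expansion {w : V} {j d K ℓ : ℕ} (hj : 1 ≤ j) (hjl : j ≤ ℓ - 1) (hl : 1 ≤ ℓ)
    (hK : ∀ u y, G.Adj u y → ∀ i, 3 ≤ i → i ≤ 2*ℓ → cyclesThroughEdge G i u y ≤ K)
    (hdeg : ∀ v : V, d ≤ Nat.card {y : V // G.Adj v y} + 1)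
    (hd4 : 4 + 2 * (K * (2*j - 1)) ≤ d) :
    d * Nat.card (SPT G w j) ≤ 2 * Nat.card (SPT G w (j+1)) := by
  classical
  haveI := spt_finite (G := G) w j
  haveI := spt_finite (G := G) w (j+1)
  haveI : Fintype (SPT G w j) := Fintype.ofFinite _
  -- forward degree bound
  have hfwd : ∀ x : SPT G w j, d ≤ 2 * Nat.card {y : V // G.Adj x.1 y ∧ G.dist y w = j+1} := by
    intro x
    set v := x.1 with hvdef
    have hvd : G.dist v w = j := x.2.2.2.2
    have hcover : ∀ y, G.Adj v y → G.dist y w ≤ j + 1 := by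
      intro y hy
      have := dist_le_dist_add_one (w := w) hy.symm
      omega
    have hsplit := card_subtype_split (fun y => G.Adj v y) (fun y => G.dist y w ≤ j)
    have hequiv : Nat.card {y : V // G.Adj v y ∧ ¬ G.dist y w ≤ j} =
        Nat.card {y : V // G.Adj v y ∧ G.dist y w = j+1} := by
      apply Nat.card_congr
      apply Equiv.subtypeEquivRight
      intro y
      constructor
      · rintro ⟨h1, h2⟩
        exact ⟨h1, by have := hcover y h1; omega⟩
      · rintro ⟨h1, h2⟩
        exact ⟨h1, by omega⟩
    have hback : Nat.card {y : V // G.Adj v y ∧ G.dist y w ≤ j} ≤ 1 + K * (2*j - 1) :=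
      back_card hj (fun u y h i h3 hi => hK u y h i h3 (by omega)) hvd
    have hdv := hdeg v
    omega
  -- the injection into level j+1
  have hinj : ∃ f : (Σ x : SPT G w j, {y : V // G.Adj x.1 y ∧ G.dist y w = j+1}) → SPT G w (j+1),
      Function.Injective f := by
    refine ⟨fun z => ⟨z.2.1, ⟨SimpleGraph.Walk.cons z.2.2.1.symm z.1.2.1, ?_, ?_, z.2.2.2⟩⟩, ?_⟩
    · refine z.1.2.2.1.cons ?_
      intro hmem
      have h1 : G.dist z.2.1 w ≤ z.1.2.1.length := support_dist_le _ hmem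
      have h2 := z.1.2.2.2.1
      have h3 := z.2.2.2
      omega
    · simp [z.1.2.2.2.1]
    · rintro ⟨⟨v, p, hp⟩, ⟨y, hy⟩⟩ ⟨⟨v', p', hp'⟩, ⟨y', hy'⟩⟩ heq
      obtain ⟨h0, heq2⟩ := Sigma.mk.inj_iff.mp heq
      subst h0
      rw [heq_iff_eq, Subtype.mk.injEq] at heq2
      have hvv : v = v' := by
        have e1 : (SimpleGraph.Walk.cons (Adj.symm hy.1) p).getVert 1 = v := by
          rw [SimpleGraph.Walk.getVert_cons_succ, SimpleGraph.Walk.getVert_zero]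
        have e2 : (SimpleGraph.Walk.cons (Adj.symm hy'.1) p').getVert 1 = v' := by
          rw [SimpleGraph.Walk.getVert_cons_succ, SimpleGraph.Walk.getVert_zero]
        rw [← e1, ← e2, heq2]
      subst hvv
      have : p = p' := by
        injection heq2 with h1 h2 h3 h4
        all_goals exact h4
      subst this
      rfl
  obtain ⟨f, hf⟩ := hinj
  have hcard : Nat.card (Σ x : SPT G w j, {y : V // G.Adj x.1 y ∧ G.dist y w = j+1}) ≤
      Nat.card (SPT G w (j+1)) := Nat.card_le_card_of_injective f hf
  have hsum : Nat.card (Σ x : SPT G w j, {y : V // G.Adj x.1 y ∧ G.dist y w = j+1}) =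
      ∑ x : SPT G w j, Nat.card {y : V // G.Adj x.1 y ∧ G.dist y w = j+1} :=
    nat_card_sigma _
  have : d * Nat.card (SPT G w j) ≤
      2 * ∑ x : SPT G w j, Nat.card {y : V // G.Adj x.1 y ∧ G.dist y w = j+1} := by
    rw [Finset.mul_sum]
    calc d * Nat.card (SPT G w j) = ∑ _x : SPT G w j, d := by
          rw [Finset.sum_const, Finset.card_univ, smul_eq_mul, Nat.card_eq_fintype_card,
            mul_comm]
      _ ≤ ∑ x : SPT G w j, 2 * Nat.card {y : V // G.Adj x.1 y ∧ G.dist y w = j+1} :=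
          Finset.sum_le_sum (fun x _ => hfwd x)
  omega


lemma spt_one_card {w : V} : Nat.card (SPT G w 1) = Nat.card {y : V // G.Adj w y} := by
  classical
  haveI := spt_finite (G := G) w 1
  apply le_antisymm
  · refine Nat.card_le_card_of_injective
      (fun x => ⟨x.1, (Classical.choose (walk_length_one x.2.1 x.2.2.2.1)).symm⟩) ?_
    rintro ⟨v, p, hp⟩ ⟨v', p', hp'⟩ h
    rw [Subtype.mk.injEq] at h
    have hvv : v = v' := h
    subst hvv
    obtain ⟨a, ha⟩ := walk_length_one p hp.2.1
    obtain ⟨a', ha'⟩ := walk_length_one p' hp'.2.1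
    have : p = p' := by rw [ha, ha']
    subst this
    rfl
  · refine Nat.card_le_card_of_injective (fun y => (⟨y.1,
      ⟨SimpleGraph.Walk.cons y.2.symm SimpleGraph.Walk.nil,
        (SimpleGraph.Walk.cons_isPath_iff _ _).mpr ⟨SimpleGraph.Walk.IsPath.nil,
          by simp [y.2.ne']⟩,
        by simp,
        SimpleGraph.dist_eq_one_iff_adj.mpr y.2.symm⟩⟩ : SPT G w 1)) ?_
    intro a b hab
    have : a.1 = b.1 := congrArg Sigma.fst hab
    exact Subtype.ext this

end Stmt13


open Stmt13 in
/-- Let `ℓ ≥ 1`, `d ≤ m`, `L > 0` with `d ≥ 4(Lℓ + 1)`, and let `F` be an `m`-vertex graph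
with minimum degree at least `d - 1` such that `c_i(u,v;F) ≤ L` for every edge `uv` and
every `3 ≤ i ≤ 2ℓ`.  Then `Δ(F) ≤ (m / d^{ℓ-1}) · g_ℓ(L)`. -/
theorem statement_13 (ℓ m d : ℕ) (hℓ : 1 ≤ ℓ) (hdm : d ≤ m) (L : ℝ) (hL : 0 < L)
    (hdL : 4 * (L * ℓ + 1) ≤ (d : ℝ))
    (F : SimpleGraph (Fin m)) [DecidableRel F.Adj]
    (hmin : ∀ w, (d : ℝ) - 1 ≤ (ndeg F w : ℝ))
    (hc : ∀ u v, F.Adj u v → ∀ i, 3 ≤ i → i ≤ 2 * ℓ → (cyclesThroughEdge F i u v : ℝ) ≤ L) :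
    (F.maxDegree : ℝ) ≤ (m : ℝ) / (d : ℝ) ^ (ℓ - 1) * gconst L ℓ := by
  classical
  set K : ℕ := ⌊L⌋₊ with hKdef
  have hKL : (K : ℝ) ≤ L := Nat.floor_le hL.le
  have hK : ∀ u v, F.Adj u v → ∀ i, 3 ≤ i → i ≤ 2*ℓ → cyclesThroughEdge F i u v ≤ K :=
    fun u v h i h3 h2 => Nat.le_floor (hc u v h i h3 h2)
  -- numeric facts about d
  have hl1 : (1:ℝ) ≤ (ℓ : ℝ) := by exact_mod_cast hℓ
  have hd4R : (4:ℝ) < d := by nlinarith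
  have hd5 : 5 ≤ d := by
    have : (4:ℕ) < d := by exact_mod_cast hd4R
    omega
  have hKdR : (4 * (K * ℓ) + 4 : ℝ) ≤ d := by
    have h1 : (K:ℝ) * ℓ ≤ L * ℓ := by
      apply mul_le_mul_of_nonneg_right hKL
      positivity
    nlinarith
  have hKd : 4 * (K * ℓ) + 4 ≤ d := by exact_mod_cast hKdR
  have hd4 : ∀ j, 1 ≤ j → j ≤ ℓ - 1 → 4 + 2 * (K * (2*j - 1)) ≤ d := by
    intro j h1 h2
    have hmul : K * (2*j - 1) ≤ K * (2*ℓ) := Nat.mul_le_mul_left K (by omega)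
    have hring : K * (2*ℓ) = 2 * (K * ℓ) := by ring
    omega
  -- the vertex of maximum degree
  haveI : Nonempty (Fin m) := ⟨⟨0, by omega⟩⟩
  obtain ⟨w, hw⟩ := F.exists_maximal_degree_vertex
  have hndeg : ∀ v : Fin m, ndeg F v = Nat.card {y : Fin m // F.Adj v y} := by
    intro v
    exact Nat.card_congr (Equiv.subtypeEquivRight (fun y => by
      simp [SimpleGraph.mem_neighborSet]))
  have hdeg : ∀ v : Fin m, d ≤ Nat.card {y : Fin m // F.Adj v y} + 1 := by
    intro v
    rw [← hndeg v]
    have := hmin v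
    have : (d:ℝ) ≤ (ndeg F v : ℝ) + 1 := by linarith
    exact_mod_cast this
  -- the chain of expansions
  have hchain : ∀ t, t ≤ ℓ - 1 →
      d^t * Nat.card (SPT F w 1) ≤ 2^t * Nat.card (SPT F w (t+1)) := by
    intro t
    induction t with
    | zero => intro _; simp
    | succ t iht =>
      intro ht
      have h1 := iht (by omega)
      have h2 : d * Nat.card (SPT F w (t+1)) ≤ 2 * Nat.card (SPT F w (t+1+1)) :=
        expansion (by omega) (by omega) hℓ hK hdeg (hd4 (t+1) (by omega) (by omega))
      calc d^(t+1) * Nat.card (SPT F w 1) = d * (d^t * Nat.card (SPT F w 1)) := by ring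
        _ ≤ d * (2^t * Nat.card (SPT F w (t+1))) := Nat.mul_le_mul_left d h1
        _ = 2^t * (d * Nat.card (SPT F w (t+1))) := by ring
        _ ≤ 2^t * (2 * Nat.card (SPT F w (t+1+1))) := Nat.mul_le_mul_left _ h2
        _ = 2^(t+1) * Nat.card (SPT F w (t+1+1)) := by ring
  have hchainℓ : d^(ℓ-1) * Nat.card (SPT F w 1) ≤ 2^(ℓ-1) * Nat.card (SPT F w ℓ) := by
    have := hchain (ℓ-1) le_rfl
    have he : ℓ - 1 + 1 = ℓ := by omega
    rwa [he] at this
  -- S 1 is the max degree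
  have hS1 : Nat.card (SPT F w 1) = F.maxDegree := by
    rw [spt_one_card, ← hndeg w, hw]
    rw [ndeg, Nat.card_eq_fintype_card]
    exact SimpleGraph.card_neighborSet_eq_degree F w
  -- S ℓ is at most m * B
  set B : ℕ := ∏ i ∈ Finset.Icc 1 (ℓ-1), (K * i + 1) with hBdef
  have hSl : Nat.card (SPT F w ℓ) ≤ m * B := by
    haveI : ∀ v : Fin m, Finite {p : F.Walk v w // p.IsPath ∧ p.length = ℓ ∧ F.dist v w = ℓ} :=
      fun v => finite_walk_subtype _ ℓ (fun p hp => hp.2.1)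
    have hsig : Nat.card (SPT F w ℓ) =
        ∑ v : Fin m, Nat.card {p : F.Walk v w // p.IsPath ∧ p.length = ℓ ∧ F.dist v w = ℓ} :=
      nat_card_sigma _
    rw [hsig]
    have hbound : ∀ v : Fin m,
        Nat.card {p : F.Walk v w // p.IsPath ∧ p.length = ℓ ∧ F.dist v w = ℓ} ≤ B := by
      intro v
      by_cases hdist : F.dist v w = ℓ
      · haveI : Finite {p : F.Walk v w // p.IsPath ∧ p.length = ℓ} :=
          finite_walk_subtype _ ℓ (fun p hp => hp.2)
        refine le_trans (Nat.card_le_card_of_injective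
          (fun x => (⟨x.1, x.2.1, x.2.2.1⟩ : {p : F.Walk v w // p.IsPath ∧ p.length = ℓ}))
          (fun a b hab => Subtype.ext (by simpa [Subtype.ext_iff] using hab))) ?_
        exact mult_lemma hK ℓ hℓ le_rfl v hdist
      · have : IsEmpty {p : F.Walk v w // p.IsPath ∧ p.length = ℓ ∧ F.dist v w = ℓ} :=
          ⟨fun p => hdist p.2.2.2⟩
        simp [Nat.card_of_isEmpty]
    calc ∑ v : Fin m, Nat.card {p : F.Walk v w // p.IsPath ∧ p.length = ℓ ∧ F.dist v w = ℓ}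
        ≤ ∑ _v : Fin m, B := Finset.sum_le_sum (fun v _ => hbound v)
      _ = m * B := by simp [Finset.sum_const, Finset.card_univ, mul_comm]
  -- the grand nat inequality
  have hgrand : d^(ℓ-1) * F.maxDegree ≤ 2^(ℓ-1) * (m * B) := by
    rw [← hS1]
    refine le_trans hchainℓ ?_
    exact Nat.mul_le_mul_left _ hSl
  -- pass to the reals
  have hdpow : (0:ℝ) < (d:ℝ)^(ℓ-1) := by positivity
  rw [gconst, div_mul_eq_mul_div, le_div_iff₀ hdpow]
  have hcast : (F.maxDegree : ℝ) * (d:ℝ)^(ℓ-1) ≤ 2^(ℓ-1) * (m * B) := by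
    have := hgrand
    have h2 : ((d^(ℓ-1) * F.maxDegree : ℕ) : ℝ) ≤ ((2^(ℓ-1) * (m * B) : ℕ) : ℝ) := by
      exact_mod_cast this
    push_cast at h2
    linarith
  refine le_trans hcast ?_
  have hBprod : (2:ℝ)^(ℓ-1) * (B:ℝ) = ∏ i ∈ Finset.Icc 1 (ℓ-1), (2 * ((K:ℝ) * i + 1)) := by
    rw [Finset.prod_mul_distrib, Finset.prod_const, Nat.card_Icc]
    have : ℓ - 1 + 1 - 1 = ℓ - 1 := by omega
    rw [this, hBdef]
    push_cast
    ring
  have hprodle : ∏ i ∈ Finset.Icc 1 (ℓ-1), (2 * ((K:ℝ) * i + 1)) ≤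
      ∏ i ∈ Finset.Icc 1 (ℓ-1), (2 * (L * i + 1)) := by
    apply Finset.prod_le_prod
    · intro i _
      positivity
    · intro i _
      have : (K:ℝ) * i ≤ L * i := by
        apply mul_le_mul_of_nonneg_right hKL
        positivity
      linarith
  calc (2:ℝ)^(ℓ-1) * (m * B) = m * ((2:ℝ)^(ℓ-1) * B) := by ring
    _ ≤ m * ∏ i ∈ Finset.Icc 1 (ℓ-1), (2 * (L * i + 1)) := by
        rw [hBprod]
        apply mul_le_mul_of_nonneg_left hprodle
        positivity
    _ = m * ∏ i ∈ Finset.Icc 1 (ℓ-1), (2 * (L * i + 1)) := rfl
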